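/- arXiv:1307.4897 — 6 statements merged into one kernel-verified Lean document; each statement's English description precedes it below -/
import Mathlib

section
/- A finite simple undirected graph is a union of edge-disjoint cycles (i.e., its edge set can be partitioned into edge sets of simple cycles) if and only if every vertex has even degree. -/
/-!
Necessity: the degree of `x` is the sum, over the cycles, of the number of cycle edges at `x`,
and a closed trail meets every vertex in an even number of edges.

Sufficiency, by induction on the number of edges: in an even graph, deleting an edge `ab` leaves
`a` and `b` as the only odd vertices; since the component of `a` contains an even number of odd
vertices, `b` is still reachable from `a`, so `ab` lies on a cycle. Deleting the edges of that
cycle keeps every degree even.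
-/

open Finset

namespace SimpleGraph

variable {V : Type*} {G : SimpleGraph V}

def cycleEdges (L : List (Σ u, G.Walk u u)) : List (Sym2 V) :=
  L.flatMap fun c => c.2.edges

/-- Edge-disjointness of the cycles is encoded as `Nodup` of their concatenated edge lists. -/
def IsCycleDecomposition (S : Set (Sym2 V)) (L : List (Σ u, G.Walk u u)) : Prop :=
  (∀ c ∈ L, c.2.IsCycle) ∧ (cycleEdges L).Nodup ∧ ∀ e, e ∈ S ↔ e ∈ cycleEdges L

theorem isCycleDecomposition_ofFn_iff {S : Set (Sym2 V)} {k : ℕ}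
    (f : Fin k → Σ u, G.Walk u u) :
    IsCycleDecomposition S (List.ofFn f) ↔
      (∀ i, (f i).2.IsCycle) ∧
      (∀ i j, i ≠ j → ∀ e, e ∈ (f i).2.edges → e ∉ (f j).2.edges) ∧
      (∀ e, e ∈ S ↔ ∃ i, e ∈ (f i).2.edges) := by
  simp only [IsCycleDecomposition, cycleEdges, List.nodup_flatMap, List.pairwise_ofFn,
    List.mem_flatMap, List.mem_ofFn, forall_exists_index, forall_apply_eq_imp_iff,
    exists_exists_eq_and, Function.onFun]
  constructor
  · rintro ⟨hcyc, ⟨-, hdisj⟩, hS⟩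
    refine ⟨hcyc, fun i j hij e hi hj => ?_, hS⟩
    rcases hij.lt_or_gt with h | h
    exacts [hdisj h hi hj, hdisj h hj hi]
  · rintro ⟨hcyc, hdisj, hS⟩
    exact ⟨hcyc, ⟨fun i => (hcyc i).edges_nodup, fun i j h e => hdisj i j h.ne e⟩, hS⟩

theorem IsCycleDecomposition.cons {S : Set (Sym2 V)} {L : List (Σ u, G.Walk u u)}
    (hL : IsCycleDecomposition S L) {u : V} {p : G.Walk u u} (hp : p.IsCycle)
    (hpS : Disjoint p.edgeSet S) : IsCycleDecomposition (p.edgeSet ∪ S) (⟨u, p⟩ :: L) := by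
  obtain ⟨hcyc, hnodup, hS⟩ := hL
  refine ⟨List.forall_mem_cons.mpr ⟨hp, hcyc⟩, ?_, fun e => ?_⟩
  · rw [cycleEdges, List.flatMap_cons, List.nodup_append]
    exact ⟨hp.edges_nodup, hnodup, fun e he f hf hef =>
      Set.disjoint_left.mp hpS he ((hS e).mpr (hef ▸ hf))⟩
  · simp only [cycleEdges, List.flatMap_cons, List.mem_append, Set.mem_union, hS]
    rfl

theorem Walk.IsTrail.even_countP_mem_edges [DecidableEq V] {u : V} {p : G.Walk u u}
    (hp : p.IsTrail) (x : V) : Even (p.edges.countP (x ∈ ·)) :=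
  (hp.even_countP_edges_iff x).mpr (by simp)

theorem degree_eq_card_filter_mem_edgeFinset [Fintype V] [DecidableEq V] [DecidableRel G.Adj]
    (x : V) : G.degree x = #{e ∈ G.edgeFinset | x ∈ e} := by
  rw [← card_incidenceFinset_eq_degree, incidenceFinset_eq_filter]

theorem IsCycleDecomposition.even_degree [Fintype V] [DecidableRel G.Adj]
    {L : List (Σ u, G.Walk u u)} (hL : IsCycleDecomposition G.edgeSet L) (x : V) :
    Even (G.degree x) := by
  classical
  obtain ⟨hcyc, hnodup, hS⟩ := hL
  have hedges : G.edgeFinset = (cycleEdges L).toFinset := by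
    ext e
    rw [mem_edgeFinset, hS, List.mem_toFinset]
  rw [degree_eq_card_filter_mem_edgeFinset, hedges, hnodup.card_eq_countP, cycleEdges,
    List.countP_flatMap]
  refine List.sum_induction Even (fun _ _ => Even.add) .zero ?_
  simp only [List.mem_map, Function.comp_apply]
  rintro _ ⟨c, hc, rfl⟩
  exact (hcyc c hc).isTrail.even_countP_mem_edges x

theorem degree_deleteEdges_add_card_filter_mem [Fintype V] [DecidableEq V] [DecidableRel G.Adj]
    {s : Finset (Sym2 V)} (hs : (s : Set (Sym2 V)) ⊆ G.edgeSet)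
    [DecidableRel (G.deleteEdges s).Adj] (x : V) :
    (G.deleteEdges s).degree x + #{e ∈ s | x ∈ e} = G.degree x := by
  have hsG : s ⊆ G.edgeFinset := by rwa [← coe_subset, coe_edgeFinset]
  have hfilter : {e ∈ G.edgeFinset \ s | x ∈ e} =
      {e ∈ G.edgeFinset | x ∈ e} \ {e ∈ s | x ∈ e} := by
    ext e
    simp only [mem_filter, mem_sdiff]
    tauto
  rw [degree_eq_card_filter_mem_edgeFinset, degree_eq_card_filter_mem_edgeFinset,
    edgeFinset_deleteEdges, hfilter, card_sdiff_add_card_eq_card (filter_subset_filter _ hsG)]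

theorem exists_ne_odd_degree_reachable [Fintype V] [DecidableRel G.Adj] {v : V}
    (hv : Odd (G.degree v)) : ∃ w ≠ v, G.Reachable v w ∧ Odd (G.degree w) := by
  classical
  let s : Set V := {w | G.Reachable v w}
  have hdeg (w : s) : (G.induce s).degree w = G.degree w :=
    degree_induce_of_neighborSet_subset fun _ hy =>
      w.2.trans ((G.mem_neighborSet _ _).mp hy).reachable
  obtain ⟨w, hwv, hw⟩ :=
    (G.induce s).exists_ne_odd_degree_of_exists_odd_degree ⟨v, .refl v⟩ (by rwa [hdeg])
  exact ⟨w, fun h => hwv (Subtype.ext h), w.2, by rwa [← hdeg]⟩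

theorem exists_isCycle_mem_edges_of_even_degree [Fintype V] [DecidableRel G.Adj]
    (heven : ∀ x, Even (G.degree x)) {a b : V} (hab : G.Adj a b) :
    ∃ (u : V) (p : G.Walk u u), p.IsCycle ∧ s(a, b) ∈ p.edges := by
  classical
  refine adj_and_reachable_delete_edges_iff_exists_cycle.mp ⟨hab, ?_⟩
  let e : Finset (Sym2 V) := {s(a, b)}
  have hodd (x : V) : Odd ((G.deleteEdges e).degree x) ↔ x = a ∨ x = b := by
    have h := heven x
    rw [← degree_deleteEdges_add_card_filter_mem (s := e) (by simpa [e] using hab), Nat.even_add,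
      filter_singleton] at h
    by_cases hx : x = a ∨ x = b <;> simp_all [e, ← Nat.not_even_iff_odd]
  obtain ⟨w, hwa, hreach, hw⟩ := exists_ne_odd_degree_reachable ((hodd a).mpr (.inl rfl))
  obtain rfl : w = b := ((hodd w).mp hw).resolve_left hwa
  simpa [e] using hreach

theorem exists_isCycleDecomposition_of_even_degree [Fintype V]
    {H : SimpleGraph V} [DecidableRel H.Adj] (hH : H ≤ G) (heven : ∀ x, Even (H.degree x)) :
    ∃ L : List (Σ u, G.Walk u u), IsCycleDecomposition H.edgeSet L := by
  induction hn : #H.edgeFinset using Nat.strong_induction_on generalizing H with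
  | _ n ih =>
  rcases H.edgeSet.eq_empty_or_nonempty with hempty | ⟨⟨a, b⟩, hab⟩
  · exact ⟨[], by simp [IsCycleDecomposition, cycleEdges, hempty]⟩
  obtain ⟨u, p, hp, -⟩ := exists_isCycle_mem_edges_of_even_degree heven hab
  classical
  set H' := H.deleteEdges p.edges.toFinset
  have hpH : p.edgeSet ⊆ H.edgeSet := p.edges_subset_edgeSet
  have heven' (x : V) : Even (H'.degree x) := by
    have h := heven x
    rw [← degree_deleteEdges_add_card_filter_mem (by rwa [Walk.coe_edges_toFinset]),
      hp.edges_nodup.card_eq_countP, Nat.even_add] at h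
    exact h.mpr (hp.isTrail.even_countP_mem_edges x)
  have hlt : #H'.edgeFinset < n := by
    rw [← hn, edgeFinset_deleteEdges]
    refine card_lt_card (sdiff_ssubset ?_ ?_)
    · rwa [← coe_subset, coe_edgeFinset, Walk.coe_edges_toFinset]
    · exact ⟨_, List.mem_toFinset.mpr (p.edges.head_mem (by simpa using hp.not_nil))⟩
  obtain ⟨L, hL⟩ := ih _ hlt ((deleteEdges_le _).trans hH) heven' rfl
  have hsplit : H.edgeSet = (p.mapLe hH).edgeSet ∪ H'.edgeSet := by
    rw [Walk.edgeSet_mapLe_eq_edgeSet, edgeSet_deleteEdges, Walk.coe_edges_toFinset,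
      Set.union_sdiff_cancel hpH]
  rw [hsplit]
  exact ⟨⟨u, p.mapLe hH⟩ :: L, hL.cons (hp.mapLe hH) (by
    rw [Walk.edgeSet_mapLe_eq_edgeSet, edgeSet_deleteEdges, Walk.coe_edges_toFinset]
    exact Set.disjoint_sdiff_right)⟩

end SimpleGraph

open SimpleGraph

theorem stmt1_general {V : Type*} [Fintype V] (G : SimpleGraph V) :
    (∃ (k : ℕ) (v : Fin k → V) (c : ∀ i, G.Walk (v i) (v i)),
        (∀ i, (c i).IsCycle) ∧
        (∀ i j, i ≠ j → ∀ e, e ∈ (c i).edges → e ∉ (c j).edges) ∧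
        (∀ e, e ∈ G.edgeSet ↔ ∃ i, e ∈ (c i).edges)) ↔
      ∀ v, Even ((G.neighborSet v).ncard) := by
  classical
  have hdeg (v : V) : (G.neighborSet v).ncard = G.degree v := by
    rw [Set.ncard_eq_toFinset_card', ← neighborFinset_def, card_neighborFinset_eq_degree]
  simp_rw [hdeg]
  constructor
  · rintro ⟨k, v, c, hc⟩
    exact ((isCycleDecomposition_ofFn_iff fun i => ⟨v i, c i⟩).mpr hc).even_degree
  · intro heven
    obtain ⟨L, hL⟩ := exists_isCycleDecomposition_of_even_degree le_rfl heven
    rw [← L.ofFn_get, isCycleDecomposition_ofFn_iff] at hL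
    exact ⟨L.length, fun i => (L.get i).1, fun i => (L.get i).2, hL⟩

/-- Veblen's theorem: a finite simple graph is an edge-disjoint union of simple
cycles (its edge set is partitioned into the edge sets of finitely many simple
cycles) if and only if every vertex has even degree. -/
theorem stmt1 {V : Type*} [Fintype V] [DecidableEq V] (G : SimpleGraph V) :
    (∃ (k : ℕ) (v : Fin k → V) (c : ∀ i, G.Walk (v i) (v i)),
        (∀ i, (c i).IsCycle) ∧
        (∀ i j, i ≠ j → ∀ e, e ∈ (c i).edges → e ∉ (c j).edges) ∧
        (∀ e, e ∈ G.edgeSet ↔ ∃ i, e ∈ (c i).edges)) ↔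
      ∀ v, Even ((G.neighborSet v).ncard) :=
  stmt1_general G
end

section
/- If G is an undirected graph with every vertex of even degree and {s,t} is an edge of G, then removing the edge {s,t} leaves s and t in the same connected component. -/
/-!
Deleting the edge `st` makes the degree of `s` odd and leaves every other degree except that of
`t` even. By the handshake lemma, applied to the connected component of `s`, that component
contains a second vertex of odd degree, which can only be `t`.
-/

namespace SimpleGraph

variable {V : Type*} {G : SimpleGraph V}

theorem ncard_neighborSet_eq_degree (v : V) [Fintype (G.neighborSet v)] :
    (G.neighborSet v).ncard = G.degree v := by
  rw [Set.ncard_eq_toFinset_card', ← neighborFinset_def, card_neighborFinset_eq_degree]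

theorem neighborSet_deleteEdges_singleton_of_notMem {e : Sym2 V} {v : V} (hv : v ∉ e) :
    (G.deleteEdges {e}).neighborSet v = G.neighborSet v := by
  ext w
  simp only [mem_neighborSet, deleteEdges_adj, Set.mem_singleton_iff, and_iff_left_iff_imp]
  rintro - rfl
  exact hv (Sym2.mem_mk_left v w)

theorem neighborSet_deleteEdges_singleton_left (s t : V) :
    (G.deleteEdges {s(s, t)}).neighborSet s = G.neighborSet s \ {t} := by
  ext w
  simpa using fun h _ _ => h.ne'

theorem exists_ne_reachable_odd_degree [Fintype V] [DecidableRel G.Adj] {v : V}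
    (hv : Odd (G.degree v)) : ∃ w, w ≠ v ∧ G.Reachable v w ∧ Odd (G.degree w) := by
  classical
  set S : Set V := {w | G.Reachable v w}
  have hclosed (w : S) : G.neighborSet w ⊆ S := fun _ hu => w.2.trans (Adj.reachable hu)
  have hdeg (w : S) : (G.induce S).degree w = G.degree w :=
    degree_induce_of_neighborSet_subset (hclosed w)
  obtain ⟨w, hwv, hw⟩ := (G.induce S).exists_ne_odd_degree_of_exists_odd_degree
    ⟨v, Reachable.refl v⟩ (by rwa [hdeg])
  exact ⟨w, fun h => hwv (Subtype.ext h), w.2, by rwa [← hdeg]⟩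

end SimpleGraph

/-- If every vertex of `G` has even degree and `{s,t}` is an edge of `G`, then
deleting the edge `{s,t}` leaves `s` and `t` in the same connected component. -/
theorem stmt2 {V : Type*} [Fintype V] (G : SimpleGraph V) (s t : V)
    (heven : ∀ v, Even ((G.neighborSet v).ncard)) (hst : G.Adj s t) :
    (G.deleteEdges {s(s, t)}).Reachable s t := by
  classical
  set G' := G.deleteEdges {s(s, t)}
  have hodd : Odd (G'.degree s) := by
    rw [← G'.ncard_neighborSet_eq_degree, G.neighborSet_deleteEdges_singleton_left,
      Set.ncard_sdiff_singleton_of_mem (show t ∈ G.neighborSet s from hst)]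
    exact Nat.Even.sub_odd ((Set.ncard_pos (Set.toFinite _)).2 ⟨t, hst⟩) (heven s) odd_one
  obtain ⟨w, hws, hreach, hw⟩ := G'.exists_ne_reachable_odd_degree hodd
  obtain rfl : w = t := by
    by_contra hwt
    rw [← G'.ncard_neighborSet_eq_degree,
      G.neighborSet_deleteEdges_singleton_of_notMem (by simp [hws, hwt])] at hw
    exact Nat.not_odd_iff_even.2 (heven w) hw
  exact hreach
end

section
/- For vertex set {1,...,n}, let T be the set of triangles with edge-length patterns (i,i,2i) or (i,i+1,2i+1). Every graph on {1,...,n} in which every vertex has even degree is the mod-2 sum (symmetric difference of edge sets) of a subfamily of T. -/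
/-!
Bisecting `[a, b]` at `m = ⌊(a + b) / 2⌋` gives a triangle `(a, m, b)` of `T`; recursing on both
halves, the mod-2 sum of these triangles is the chord `{a, b}` plus the path `a, a + 1, …, b`.
Summing over the edges of `G` yields `G` plus, on each path edge `{x, x + 1}`, the number of edges
of `G` crossing the cut `{1, …, x} | {x + 1, …, n}`, which is even because all degrees are even.
-/

/-- Triangles of the family `T` (length patterns `(i,i,2i)` or `(i,i+1,2i+1)`). -/
def InT (n a b c : ℕ) : Prop :=
  1 ≤ a ∧ a < b ∧ b < c ∧ c ≤ n ∧
    ∃ i, 1 ≤ i ∧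
      ((b - a = i ∧ c - b = i) ∨ (b - a = i ∧ c - b = i + 1) ∨
        (b - a = i + 1 ∧ c - b = i))

open Finset

section EvenDegree

variable {V : Type*} (G : SimpleGraph V) [DecidableRel G.Adj]

theorem ncard_neighborSet_eq_card_filter {s : Finset V} (hs : ∀ v w, G.Adj v w → w ∈ s)
    (v : V) : (G.neighborSet v).ncard = #{w ∈ s | G.Adj v w} := by
  rw [← Set.ncard_coe_finset, coe_filter]
  congr 1
  ext w
  exact ⟨fun h => ⟨hs v w h, h⟩, And.right⟩

theorem sum_adj_product_self_eq_zero (A : Finset V) :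
    ∑ p ∈ A ×ˢ A, (if G.Adj p.1 p.2 then (1 : ZMod 2) else 0) = 0 := by
  refine sum_involution (fun p _ => p.swap) (fun p _ => ?_) (fun p _ hp => ?_)
    (fun p hp => by simpa [and_comm] using hp) (fun p _ => rfl)
  · simp only [Prod.fst_swap, Prod.snd_swap, G.adj_comm p.2, CharTwo.add_self_eq_zero]
  · have hadj : G.Adj p.1 p.2 := by by_contra h; simp [h] at hp
    exact fun h => hadj.ne (congrArg Prod.snd h)

theorem even_card_adj_product [DecidableEq V] {A B : Finset V} (hAB : Disjoint A B)
    (hdeg : ∀ v ∈ A, Even #{w ∈ A ∪ B | G.Adj v w}) :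
    Even #{p ∈ A ×ˢ B | G.Adj p.1 p.2} := by
  simp only [← ZMod.natCast_eq_zero_iff_even] at hdeg ⊢
  have hsum : ∑ v ∈ A, ∑ w ∈ A ∪ B, (if G.Adj v w then (1 : ZMod 2) else 0) = 0 :=
    sum_eq_zero fun v hv => by rw [← natCast_card_filter, hdeg v hv]
  simp only [sum_union hAB, sum_add_distrib, ← sum_product', sum_adj_product_self_eq_zero,
    zero_add] at hsum
  rwa [natCast_card_filter]

end EvenDegree

def IsTriangleEdge (x y : ℕ) (T : ℕ × ℕ × ℕ) : Prop :=
  (x, y) = (T.1, T.2.1) ∨ (x, y) = (T.2.1, T.2.2) ∨ (x, y) = (T.1, T.2.2)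

instance (x y : ℕ) : DecidablePred (IsTriangleEdge x y) :=
  fun _ => inferInstanceAs (Decidable (_ ∨ _))

/-- A family of triangles is a finitely supported `ZMod 2`-valued function, so that mod-2 sums of
families are additions; `edgeParity x y` counts, mod 2, its triangles having the edge `(x, y)`. -/
noncomputable def edgeParity (x y : ℕ) : (ℕ × ℕ × ℕ →₀ ZMod 2) →ₗ[ZMod 2] ZMod 2 :=
  Finsupp.linearCombination (ZMod 2) fun T => if IsTriangleEdge x y T then 1 else 0

theorem edgeParity_apply (x y : ℕ) (F : ℕ × ℕ × ℕ →₀ ZMod 2) :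
    edgeParity x y F = #{T ∈ F.support | IsTriangleEdge x y T} := by
  have hone : ∀ T ∈ F.support, F T = 1 := fun T hT =>
    Fin.eq_one_of_ne_zero _ (Finsupp.mem_support_iff.1 hT)
  rw [edgeParity, Finsupp.linearCombination_apply, Finsupp.sum, natCast_card_filter]
  exact sum_congr rfl fun T hT => by rw [hone T hT, one_smul]

/-- With `m = ⌊(a + b) / 2⌋` the triangle `(a, m, b)` has side pattern `(i, i)` or `(i, i + 1)`. -/
noncomputable def bisectionTriangles (a b : ℕ) : ℕ × ℕ × ℕ →₀ ZMod 2 :=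
  if b ≤ a + 1 then 0
  else Finsupp.single (a, (a + b) / 2, b) 1 + bisectionTriangles a ((a + b) / 2) +
    bisectionTriangles ((a + b) / 2) b
termination_by b - a

theorem inT_of_mem_support_bisectionTriangles {n a b : ℕ} (ha : 1 ≤ a) (hb : b ≤ n) :
    ∀ T ∈ (bisectionTriangles a b).support, InT n T.1 T.2.1 T.2.2 := by
  intro T hT
  rw [bisectionTriangles] at hT
  split_ifs at hT with h
  · simp at hT
  · rcases mem_union.1 (Finsupp.support_add hT) with hT | hT
    · rcases mem_union.1 (Finsupp.support_add hT) with hT | hT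
      · obtain rfl := mem_singleton.1 (Finsupp.support_single_subset hT)
        show InT n a ((a + b) / 2) b
        exact ⟨ha, by omega, by omega, hb, (a + b) / 2 - a, by omega, by omega⟩
      · exact inT_of_mem_support_bisectionTriangles ha (by omega) T hT
    · exact inT_of_mem_support_bisectionTriangles (by omega) hb T hT
termination_by b - a

theorem edgeParity_bisectionTriangles {a b : ℕ} (hab : a < b) (x y : ℕ) :
    edgeParity x y (bisectionTriangles a b) =
      (if a ≤ x ∧ y = x + 1 ∧ y ≤ b then 1 else 0) + (if x = a ∧ y = b then 1 else 0) := by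
  by_cases h : b ≤ a + 1
  · rw [bisectionTriangles, if_pos h, map_zero]
    split_ifs <;> first | decide | (exfalso; omega)
  · rw [bisectionTriangles, if_neg h, map_add, map_add, edgeParity,
      Finsupp.linearCombination_single, smul_eq_mul, one_mul, ← edgeParity,
      edgeParity_bisectionTriangles (by omega : a < (a + b) / 2),
      edgeParity_bisectionTriangles (by omega : (a + b) / 2 < b)]
    simp only [IsTriangleEdge, Prod.mk.injEq]
    split_ifs <;> first | decide | (exfalso; omega)
termination_by b - a

section EvenGraph

variable {n : ℕ} {G : SimpleGraph ℕ} [DecidableRel G.Adj]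

def orderedEdges (n : ℕ) (G : SimpleGraph ℕ) [DecidableRel G.Adj] : Finset (ℕ × ℕ) :=
  {e ∈ Icc 1 n ×ˢ Icc 1 n | e.1 < e.2 ∧ G.Adj e.1 e.2}

theorem mem_orderedEdges (hsupp : ∀ a b, G.Adj a b → 1 ≤ a ∧ a ≤ n ∧ 1 ≤ b ∧ b ≤ n)
    {e : ℕ × ℕ} : e ∈ orderedEdges n G ↔ e.1 < e.2 ∧ G.Adj e.1 e.2 := by
  simp only [orderedEdges, mem_filter, mem_product, mem_Icc, and_iff_right_iff_imp]
  exact fun h => by have := hsupp _ _ h.2; omega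

noncomputable def bisectionFamily (n : ℕ) (G : SimpleGraph ℕ) [DecidableRel G.Adj] :
    ℕ × ℕ × ℕ →₀ ZMod 2 :=
  ∑ e ∈ orderedEdges n G, bisectionTriangles e.1 e.2

theorem inT_of_mem_support_bisectionFamily :
    ∀ T ∈ (bisectionFamily n G).support, InT n T.1 T.2.1 T.2.2 := by
  intro T hT
  obtain ⟨e, he, hT⟩ := mem_biUnion.1 (Finsupp.support_finsetSum hT)
  simp only [orderedEdges, mem_filter, mem_product, mem_Icc] at he
  exact inT_of_mem_support_bisectionTriangles he.1.1.1 he.1.2.2 T hT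

theorem sum_chord_orderedEdges (hsupp : ∀ a b, G.Adj a b → 1 ≤ a ∧ a ≤ n ∧ 1 ≤ b ∧ b ≤ n)
    {x y : ℕ} (hxy : x < y) :
    ∑ e ∈ orderedEdges n G, (if x = e.1 ∧ y = e.2 then (1 : ZMod 2) else 0) =
      if G.Adj x y then 1 else 0 := by
  simp only [← Prod.mk.injEq, sum_ite_eq, mem_orderedEdges hsupp, hxy, true_and]

/-- Each path edge `(x, x + 1)` is covered once for every graph edge crossing the cut between
`{1, …, x}` and `{x + 1, …, n}`, and there are evenly many of those. -/
theorem sum_path_orderedEdges (hsupp : ∀ a b, G.Adj a b → 1 ≤ a ∧ a ≤ n ∧ 1 ≤ b ∧ b ≤ n)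
    (heven : ∀ v, Even ((G.neighborSet v).ncard)) (x y : ℕ) :
    ∑ e ∈ orderedEdges n G, (if e.1 ≤ x ∧ y = x + 1 ∧ y ≤ e.2 then (1 : ZMod 2) else 0) = 0 := by
  by_cases hy : y = x + 1
  · subst hy
    have hcut : {e ∈ orderedEdges n G | e.1 ≤ x ∧ x + 1 = x + 1 ∧ x + 1 ≤ e.2} =
        {p ∈ Icc 1 x ×ˢ Icc (x + 1) n | G.Adj p.1 p.2} := by
      ext e
      simp only [orderedEdges, mem_filter, mem_product, mem_Icc]
      constructor
      · rintro ⟨⟨⟨⟨h1, -⟩, -, h4⟩, -, hadj⟩, h5, -, h6⟩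
        exact ⟨⟨⟨h1, h5⟩, h6, h4⟩, hadj⟩
      · rintro ⟨⟨⟨h1, h2⟩, h3, h4⟩, hadj⟩
        exact ⟨⟨⟨⟨h1, by omega⟩, by omega, h4⟩, by omega, hadj⟩, h2, trivial, h3⟩
    rw [sum_boole, hcut, ZMod.natCast_eq_zero_iff_even]
    refine even_card_adj_product G (disjoint_left.2 fun w h1 h2 => ?_) fun v _ => ?_
    · simp only [mem_Icc] at h1 h2; omega
    · rw [← ncard_neighborSet_eq_card_filter G _ v]
      · exact heven v
      · intro v w h
        have := hsupp v w h
        simp only [mem_union, mem_Icc]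
        omega
  · exact sum_eq_zero fun e _ => if_neg fun h => hy h.2.1

theorem edgeParity_bisectionFamily (hsupp : ∀ a b, G.Adj a b → 1 ≤ a ∧ a ≤ n ∧ 1 ≤ b ∧ b ≤ n)
    (heven : ∀ v, Even ((G.neighborSet v).ncard)) {x y : ℕ} (hxy : x < y) :
    edgeParity x y (bisectionFamily n G) = if G.Adj x y then 1 else 0 := by
  rw [bisectionFamily, map_sum, sum_congr rfl fun e he =>
    edgeParity_bisectionTriangles ((mem_orderedEdges hsupp).1 he).1 x y, sum_add_distrib,
    sum_path_orderedEdges hsupp heven, sum_chord_orderedEdges hsupp hxy, zero_add]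

end EvenGraph

/-- Every graph on `{1,…,n}` in which every vertex has even degree is the mod-2
sum (symmetric difference of edge sets) of a subfamily of the triangles `T`:
an edge `{a,b}` is present iff it lies in an odd number of the chosen triangles. -/
theorem stmt5 (n : ℕ) (G : SimpleGraph ℕ)
    (hsupp : ∀ a b, G.Adj a b → 1 ≤ a ∧ a ≤ n ∧ 1 ≤ b ∧ b ≤ n)
    (heven : ∀ v, Even ((G.neighborSet v).ncard)) :
    ∃ S : Finset (ℕ × ℕ × ℕ), (∀ T ∈ S, InT n T.1 T.2.1 T.2.2) ∧
      ∀ a b : ℕ, a < b →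
        (G.Adj a b ↔ Odd (S.filter (fun T =>
          (a, b) = (T.1, T.2.1) ∨ (a, b) = (T.2.1, T.2.2) ∨
            (a, b) = (T.1, T.2.2))).card) := by
  classical
  refine ⟨(bisectionFamily n G).support, inT_of_mem_support_bisectionFamily, fun a b hab => ?_⟩
  change G.Adj a b ↔ Odd #{T ∈ _ | IsTriangleEdge a b T}
  rw [← ZMod.natCast_eq_one_iff_odd, ← edgeParity_apply,
    edgeParity_bisectionFamily hsupp heven hab]
  split_ifs with h <;> simp [h]
end

section
/- Let C : {0,1}^m → {0,1}^n be a function whose range is a code of minimum distance δn (for constant δ>0) with m ≤ cn for a constant c, each output bit depending on at most 2^d input bits, and C non-degenerate in every input coordinate. Then, by counting input-output dependencies, some input bit is connected to at most n·2^d/m output bits, while non-degeneracy and the distance force every input bit to be connected to at least δn output bits; hence 2^d ≥ δm, so d ≥ log(δm). -/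
/-- Let `C : {0,1}^m → {0,1}^n` have range a code of minimum distance `δn`,
with `m ≤ c·n`, each output bit depending on at most `2^d` input bits, and `C`
non-degenerate in every input coordinate. Then `2^d ≥ δ·m`
(hence `d ≥ log (δ m)`, i.e. `d = Ω(log n)` when `m = Θ(n)`). -/
theorem stmt12 {m n : ℕ} (C : (Fin m → Bool) → (Fin n → Bool))
    (d : ℕ) (δ c : ℝ) (hδ : 0 < δ)
    (hm : (m : ℝ) ≤ c * n)
    (hdist : ∀ x y : Fin m → Bool, C x ≠ C y →
      δ * n ≤ (Set.ncard {j : Fin n | C x j ≠ C y j} : ℝ))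
    (hdep : ∀ j : Fin n,
      Set.ncard {i : Fin m |
        ∃ x, C x j ≠ C (Function.update x i (! x i)) j} ≤ 2 ^ d)
    (hnd : ∀ i : Fin m, ∃ x, C x ≠ C (Function.update x i (! x i))) :
    δ * m ≤ (2 : ℝ) ^ d := by
  classical
  rcases Nat.eq_zero_or_pos m with hm0 | hm0
  · subst hm0
    simp only [Nat.cast_zero, mul_zero]
    positivity
  rcases Nat.eq_zero_or_pos n with hn0 | hn0
  · exfalso
    subst hn0
    obtain ⟨x, hx⟩ := hnd ⟨0, hm0⟩
    exact hx (Subsingleton.elim _ _)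
  set P : Fin m → Fin n → Prop :=
    fun i j => ∃ x, C x j ≠ C (Function.update x i (! x i)) j with hP
  -- each input bit influences at least δn output bits
  have key : ∀ i : Fin m,
      δ * n ≤ ((Finset.univ.filter (fun j => P i j)).card : ℝ) := by
    intro i
    obtain ⟨x, hx⟩ := hnd i
    refine (hdist x (Function.update x i (! x i)) hx).trans ?_
    have hle : {j : Fin n | C x j ≠ C (Function.update x i (! x i)) j}.ncard
        ≤ (Finset.univ.filter (fun j => P i j)).card := by
      rw [Set.ncard_eq_toFinset_card', Set.toFinset_setOf]
      apply Finset.card_le_card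
      intro j hj
      simp only [Finset.mem_filter, Finset.mem_univ, true_and] at hj ⊢
      exact ⟨x, hj⟩
    exact_mod_cast hle
  have hdep' : ∀ j : Fin n,
      (Finset.univ.filter (fun i => P i j)).card ≤ 2 ^ d := by
    intro j
    have := hdep j
    rwa [Set.ncard_eq_toFinset_card', Set.toFinset_setOf] at this
  -- double counting
  have swap : (∑ i : Fin m, (Finset.univ.filter (fun j => P i j)).card)
      = ∑ j : Fin n, (Finset.univ.filter (fun i => P i j)).card := by
    simp only [Finset.card_filter]
    exact Finset.sum_comm
  have h1 : δ * n * m ≤ ((∑ i : Fin m, (Finset.univ.filter (fun j => P i j)).card : ℕ) : ℝ) := by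
    push_cast
    calc δ * n * m = ∑ _i : Fin m, δ * n := by
          rw [Finset.sum_const, Finset.card_univ, Fintype.card_fin]
          ring
      _ ≤ _ := Finset.sum_le_sum fun i _ => key i
  have h2 : ((∑ j : Fin n, (Finset.univ.filter (fun i => P i j)).card : ℕ) : ℝ)
      ≤ (n : ℝ) * 2 ^ d := by
    have : (∑ j : Fin n, (Finset.univ.filter (fun i => P i j)).card) ≤ n * 2 ^ d := by
      calc (∑ j : Fin n, (Finset.univ.filter (fun i => P i j)).card)
          ≤ ∑ _j : Fin n, 2 ^ d := Finset.sum_le_sum fun j _ => hdep' j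
        _ = n * 2 ^ d := by simp [Finset.sum_const, mul_comm]
    calc ((∑ j : Fin n, (Finset.univ.filter (fun i => P i j)).card : ℕ) : ℝ)
        ≤ ((n * 2 ^ d : ℕ) : ℝ) := by exact_mod_cast this
      _ = (n : ℝ) * 2 ^ d := by push_cast; ring
  rw [swap] at h1
  have hn : (0 : ℝ) < n := by exact_mod_cast hn0
  nlinarith [h1.trans h2]
end

section
/- Let G be a graph on {1,...,n} with every vertex of even degree, G nonempty, and suppose G is not itself a member of T (the set of triangles with length patterns (i,i,2i) or (i,i+1,2i+1)). Let e be an edge of G of maximal length l ≥ 2. Then there exists a triangle t ∈ T containing e as its longest edge, and the graph H = G ⊕ t (symmetric difference of edge sets) has every vertex of even degree and satisfies d(H) < d(G), where d(G) = (l, m) with m the number of edges of G of length l, ordered lexicographically. -/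
/-!
Let `b` be the (near-)midpoint of `u` and `v`: the triangle `u b v` lies in `T` with longest
edge `uv`. Adding a triangle mod 2 gives each of its vertices two incidences, so all degrees stay
even. It removes `uv` and adds only the two shorter edges `ub`, `bv`, so no edge longer than `l`
appears and the number of edges of length `l` drops.
-/

open scoped symmDiff

theorem Set.even_ncard_symmDiff {α : Type*} {A B : Set α} (hA : A.Finite) (hB : B.Finite)
    (hAe : Even A.ncard) (hBe : Even B.ncard) : Even (A ∆ B).ncard := by
  rw [Set.symmDiff_def, Set.ncard_union_eq disjoint_sdiff_sdiff hA.sdiff hB.sdiff]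
  have hA' := Set.ncard_inter_add_ncard_sdiff_eq_ncard A B hA
  have hB' := Set.ncard_inter_add_ncard_sdiff_eq_ncard B A hB
  rw [Set.inter_comm] at hB'
  rw [Nat.even_iff] at *
  omega

namespace SimpleGraph

variable {V : Type*}

/-- `G ⊕ S`; `fromEdgeSet` drops the diagonal elements of `S`. -/
def symmDiffEdges (G : SimpleGraph V) (S : Set (Sym2 V)) : SimpleGraph V :=
  fromEdgeSet (G.edgeSet ∆ S)

variable (G : SimpleGraph V) {S : Set (Sym2 V)}

theorem symmDiffEdges_adj (hS : ∀ e ∈ S, ¬e.IsDiag) (x y : V) :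
    (G.symmDiffEdges S).Adj x y ↔ Xor' (G.Adj x y) (s(x, y) ∈ S) := by
  rw [symmDiffEdges, fromEdgeSet_adj, Set.mem_symmDiff, mem_edgeSet]
  refine ⟨And.left, fun h => ⟨h, ?_⟩⟩
  rintro rfl
  rcases h with ⟨h, -⟩ | ⟨h, -⟩
  · exact G.loopless.irrefl x h
  · exact hS _ h (Sym2.mk_isDiag_iff.2 rfl)

theorem neighborSet_symmDiffEdges (hS : ∀ e ∈ S, ¬e.IsDiag) (w : V) :
    (G.symmDiffEdges S).neighborSet w = G.neighborSet w ∆ {x | s(w, x) ∈ S} := by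
  ext x
  rw [mem_neighborSet, symmDiffEdges_adj G hS, Set.mem_symmDiff]
  rfl

end SimpleGraph

section Triangle

variable {V : Type*} {a b c : V}

theorem mem_triangle_iff (x y : V) :
    s(x, y) ∈ ({s(a, b), s(b, c), s(a, c)} : Set (Sym2 V)) ↔
      (x = a ∧ y = b) ∨ (x = b ∧ y = a) ∨ (x = b ∧ y = c) ∨ (x = c ∧ y = b) ∨
      (x = a ∧ y = c) ∨ (x = c ∧ y = a) := by
  simp only [Set.mem_insert_iff, Set.mem_singleton_iff, Sym2.eq_iff]
  tauto

theorem not_isDiag_of_mem_triangle (hab : a ≠ b) (hbc : b ≠ c) (hac : a ≠ c) :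
    ∀ e ∈ ({s(a, b), s(b, c), s(a, c)} : Set (Sym2 V)), ¬e.IsDiag := by
  simp [hab, hbc, hac]

theorem finite_triangle_incident (w : V) :
    {x | s(w, x) ∈ ({s(a, b), s(b, c), s(a, c)} : Set (Sym2 V))}.Finite := by
  refine (Set.toFinite {a, b, c}).subset fun x hx => ?_
  rw [Set.mem_ofPred_eq, mem_triangle_iff] at hx
  simp only [Set.mem_insert_iff, Set.mem_singleton_iff]
  tauto

theorem even_ncard_triangle_incident (hab : a ≠ b) (hbc : b ≠ c) (hac : a ≠ c) (w : V) :
    Even {x | s(w, x) ∈ ({s(a, b), s(b, c), s(a, c)} : Set (Sym2 V))}.ncard := by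
  set A := {x | s(w, x) ∈ ({s(a, b), s(b, c), s(a, c)} : Set (Sym2 V))}
  have pair : ∀ p q : V, p ≠ q → (∀ x, x ∈ A ↔ x = p ∨ x = q) → Even A.ncard := by
    intro p q hpq h
    rw [show A = {p, q} from Set.ext h, Set.ncard_pair hpq]
    exact even_two
  by_cases hw : w = a ∨ w = b ∨ w = c
  · rcases hw with rfl | rfl | rfl
    · exact pair b c hbc fun x => by rw [Set.mem_ofPred_eq, mem_triangle_iff]; grind
    · exact pair a c hac fun x => by rw [Set.mem_ofPred_eq, mem_triangle_iff]; grind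
    · exact pair a b hab fun x => by rw [Set.mem_ofPred_eq, mem_triangle_iff]; grind
  · rw [show A = ∅ from Set.eq_empty_of_forall_notMem fun x hx => ?_, Set.ncard_empty]
    · exact Even.zero
    · rw [Set.mem_ofPred_eq, mem_triangle_iff] at hx
      tauto

end Triangle

theorem inT_midpoint {n u v : ℕ} (hu : 1 ≤ u) (hv : v ≤ n) (h2 : u + 2 ≤ v) :
    InT n u (u + (v - u) / 2) v := by
  refine ⟨hu, by omega, by omega, hv, (v - u) / 2, by omega, ?_⟩
  omega

/-- The edges of length `l`, each listed once as `(min, max)`: the multiplicity in `d(G)`. -/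
def longEdges (G : SimpleGraph ℕ) (l : ℕ) : Set (ℕ × ℕ) :=
  {p | p.1 < p.2 ∧ G.Adj p.1 p.2 ∧ p.2 - p.1 = l}

theorem ncard_longEdges_symmDiffEdges_lt {G : SimpleGraph ℕ} {S : Set (Sym2 ℕ)}
    (hS : ∀ e ∈ S, ¬e.IsDiag) {u v l : ℕ} (huv : u < v) (hl : v - u = l) (he : G.Adj u v)
    (huvS : s(u, v) ∈ S) (hlong : ∀ x y, s(x, y) ∈ S → x < y → y - x = l → x = u ∧ y = v)
    (hfin : (longEdges G l).Finite) :
    (longEdges (G.symmDiffEdges S) l).ncard < (longEdges G l).ncard := by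
  refine Set.ncard_lt_ncard ⟨?_, fun hsub => ?_⟩ hfin
  · rintro ⟨x, y⟩ ⟨hxy, hadj, hlen⟩
    rcases (G.symmDiffEdges_adj hS x y).1 hadj with ⟨hG, -⟩ | ⟨hSxy, hnG⟩
    · exact ⟨hxy, hG, hlen⟩
    · obtain ⟨rfl, rfl⟩ := hlong x y hSxy hxy hlen
      exact absurd he hnG
  · have huvG : (u, v) ∈ longEdges G l := ⟨huv, he, hl⟩
    obtain ⟨-, hH, -⟩ := hsub huvG
    rcases (G.symmDiffEdges_adj hS u v).1 hH with ⟨-, h⟩ | ⟨-, h⟩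
    exacts [h huvS, h he]

theorem stmt17_general (n : ℕ) (G : SimpleGraph ℕ)
    (hsupp : ∀ a b, G.Adj a b → 1 ≤ a ∧ a ≤ n ∧ 1 ≤ b ∧ b ≤ n)
    (heven : ∀ v, Even ((G.neighborSet v).ncard))
    (u v l : ℕ) (huv : u < v) (he : G.Adj u v) (hl : v - u = l) (hl2 : 2 ≤ l)
    (hmaxlen : ∀ a b, G.Adj a b → max a b - min a b ≤ l) :
    ∃ a b c : ℕ, InT n a b c ∧ a = u ∧ c = v ∧
      ∃ H : SimpleGraph ℕ,
        (∀ x y, H.Adj x y ↔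
          Xor' (G.Adj x y)
            (s(x, y) ∈ ({s(a, b), s(b, c), s(a, c)} : Set (Sym2 ℕ)))) ∧
        (∀ w, Even ((H.neighborSet w).ncard)) ∧
        ((∀ x y, H.Adj x y → max x y - min x y < l) ∨
          ((∀ x y, H.Adj x y → max x y - min x y ≤ l) ∧
            Set.ncard {p : ℕ × ℕ | p.1 < p.2 ∧ H.Adj p.1 p.2 ∧ p.2 - p.1 = l} <
              Set.ncard {p : ℕ × ℕ | p.1 < p.2 ∧ G.Adj p.1 p.2 ∧ p.2 - p.1 = l})) := by
  obtain ⟨hu, -, -, hv⟩ := hsupp u v he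
  have hT := inT_midpoint hu hv (by omega : u + 2 ≤ v)
  set b := u + (v - u) / 2
  have hub : u < b := hT.2.1
  have hbv : b < v := hT.2.2.1
  set S : Set (Sym2 ℕ) := {s(u, b), s(b, v), s(u, v)}
  have hS := not_isDiag_of_mem_triangle hub.ne hbv.ne (hub.trans hbv).ne
  refine ⟨u, b, v, hT, rfl, rfl, G.symmDiffEdges S, G.symmDiffEdges_adj hS, fun w => ?_,
    Or.inr ⟨fun x y hxy => ?_, ncard_longEdges_symmDiffEdges_lt hS huv hl he ?_ ?_ ?_⟩⟩
  · rw [G.neighborSet_symmDiffEdges hS]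
    exact Set.even_ncard_symmDiff ((Set.finite_Iic n).subset fun x hx => (hsupp w x hx).2.2.2)
      (finite_triangle_incident w) (heven w)
      (even_ncard_triangle_incident hub.ne hbv.ne (hub.trans hbv).ne w)
  · rcases (G.symmDiffEdges_adj hS x y).1 hxy with ⟨h, -⟩ | ⟨h, -⟩
    · exact hmaxlen x y h
    · rw [mem_triangle_iff] at h
      omega
  · exact Set.mem_insert_of_mem _ (Set.mem_insert_of_mem _ rfl)
  · intro x y h
    rw [mem_triangle_iff] at h
    omega
  · refine (Set.finite_Iic (n, n)).subset fun p hp => ?_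
    exact ⟨(hsupp _ _ hp.2.1).2.1, (hsupp _ _ hp.2.1).2.2.2⟩

/-- Decomposition step: if `G` on `{1,…,n}` has all degrees even, is nonempty,
is not itself a triangle of `T`, and `{u,v}` is an edge of maximal length
`l = v - u ≥ 2`, then there is a triangle `t ∈ T` with longest edge `{u,v}`
such that `H = G ⊕ t` has all degrees even and `d(H) < d(G)` lexicographically,
where `d(G) = (max edge length, number of edges of that length)`. -/
theorem stmt17 (n : ℕ) (G : SimpleGraph ℕ)
    (hsupp : ∀ a b, G.Adj a b → 1 ≤ a ∧ a ≤ n ∧ 1 ≤ b ∧ b ≤ n)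
    (heven : ∀ v, Even ((G.neighborSet v).ncard))
    (hnotT : ¬ ∃ a b c, InT n a b c ∧
      ∀ x y, G.Adj x y ↔
        s(x, y) ∈ ({s(a, b), s(b, c), s(a, c)} : Set (Sym2 ℕ)))
    (u v l : ℕ) (huv : u < v) (he : G.Adj u v) (hl : v - u = l) (hl2 : 2 ≤ l)
    (hmaxlen : ∀ a b, G.Adj a b → max a b - min a b ≤ l) :
    ∃ a b c : ℕ, InT n a b c ∧ a = u ∧ c = v ∧
      ∃ H : SimpleGraph ℕ,
        (∀ x y, H.Adj x y ↔
          Xor' (G.Adj x y)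
            (s(x, y) ∈ ({s(a, b), s(b, c), s(a, c)} : Set (Sym2 ℕ)))) ∧
        (∀ w, Even ((H.neighborSet w).ncard)) ∧
        ((∀ x y, H.Adj x y → max x y - min x y < l) ∨
          ((∀ x y, H.Adj x y → max x y - min x y ≤ l) ∧
            Set.ncard {p : ℕ × ℕ | p.1 < p.2 ∧ H.Adj p.1 p.2 ∧ p.2 - p.1 = l} <
              Set.ncard {p : ℕ × ℕ | p.1 < p.2 ∧ G.Adj p.1 p.2 ∧ p.2 - p.1 = l})) :=
  stmt17_general n G hsupp heven u v l huv he hl hl2 hmaxlen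
end

section
/- If every vertex of a graph G on {1,...,n} has even degree and the maximal edge length of G is 2 with exactly one edge of length 2, then G is a triangle with edge lengths 1, 1, 2, i.e., G has vertex set support {u, u+1, u+2} with edges {u,u+1}, {u+1,u+2}, {u,u+2} for some u. -/
/-!
Every edge has length 1 except the unique long edge `{u, u + 2}`. The least vertex `m` of
positive degree only has neighbours above it, hence inside `{m + 1}` unless `m = u`; since its
degree is even and positive, `m = u`. Symmetrically the largest such vertex is `u + 2`. So all
edges lie in `{u, u + 1, u + 2}`, and evenness of the degrees of `u` and `u + 2`, which are
adjacent, forces the edges `{u, u + 1}` and `{u + 1, u + 2}`.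
-/

namespace SimpleGraph

variable {V : Type*} {G : SimpleGraph V}

theorem not_neighborSet_subset_singleton {v w x : V} (heven : Even (G.neighborSet v).ncard)
    (hw : G.Adj v w) : ¬ G.neighborSet v ⊆ {x} := by
  intro hsub
  rw [(Set.subset_singleton_iff_eq.mp hsub).resolve_left (Set.nonempty_of_mem hw).ne_empty,
    Set.ncard_singleton] at heven
  exact Nat.not_even_one heven

theorem adj_of_neighborSet_subset_pair {v x y : V} (heven : Even (G.neighborSet v).ncard)
    (hy : G.Adj v y) (hsub : G.neighborSet v ⊆ {x, y}) : G.Adj v x := by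
  by_contra hx
  refine not_neighborSet_subset_singleton heven hy (x := y) fun w hw => ?_
  rcases hsub hw with rfl | hwy
  · exact absurd hw hx
  · exact hwy

end SimpleGraph

open SimpleGraph

def UnitLengthExcept (G : SimpleGraph ℕ) (u : ℕ) : Prop :=
  ∀ a b, a < b → G.Adj a b → b = a + 1 ∨ (a = u ∧ b = u + 2)

section UnitLengthExcept

variable {G : SimpleGraph ℕ} {u : ℕ}

theorem exists_unitLengthExcept (hmax : ∀ a b, G.Adj a b → max a b - min a b ≤ 2)
    (honce : Set.ncard {p : ℕ × ℕ | p.1 < p.2 ∧ G.Adj p.1 p.2 ∧ p.2 - p.1 = 2} = 1) :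
    ∃ u, G.Adj u (u + 2) ∧ UnitLengthExcept G u := by
  obtain ⟨⟨u, v⟩, hp⟩ := Set.ncard_eq_one.mp honce
  have hlong : (u, v) ∈ {p : ℕ × ℕ | p.1 < p.2 ∧ G.Adj p.1 p.2 ∧ p.2 - p.1 = 2} :=
    hp ▸ rfl
  obtain ⟨huv, hadj, hlen⟩ := hlong
  obtain rfl : v = u + 2 := by omega
  refine ⟨u, hadj, fun a b hab h => ?_⟩
  have hle := hmax a b h
  rw [max_eq_right hab.le, min_eq_left hab.le] at hle
  by_cases hlen : b - a = 2
  · have hmem : (a, b) ∈ ({(u, u + 2)} : Set (ℕ × ℕ)) := hp ▸ ⟨hab, h, hlen⟩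
    simp only [Set.mem_singleton_iff, Prod.mk.injEq] at hmem
    exact Or.inr hmem
  · omega

theorem UnitLengthExcept.eq_of_forall_adj_gt (hedge : UnitLengthExcept G u) {m w : ℕ}
    (heven : Even (G.neighborSet m).ncard) (hw : G.Adj m w) (hgt : ∀ w, G.Adj m w → m < w) :
    m = u := by
  by_contra hmu
  refine not_neighborSet_subset_singleton heven hw (x := m + 1) fun w' hw' => ?_
  rcases hedge m w' (hgt w' hw') hw' with rfl | ⟨rfl, -⟩
  · rfl
  · exact absurd rfl hmu

theorem UnitLengthExcept.eq_add_two_of_forall_adj_lt (hedge : UnitLengthExcept G u) {M w : ℕ}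
    (heven : Even (G.neighborSet M).ncard) (hw : G.Adj M w) (hlt : ∀ w, G.Adj M w → w < M) :
    M = u + 2 := by
  by_contra hMu
  refine not_neighborSet_subset_singleton heven hw (x := M - 1) fun w' hw' => ?_
  rcases hedge w' M (hlt w' hw') hw'.symm with h | ⟨-, h⟩
  · exact Set.mem_singleton_iff.mpr (by omega)
  · exact absurd h hMu

theorem UnitLengthExcept.support_subset_Icc (hedge : UnitLengthExcept G u)
    (heven : ∀ v, Even (G.neighborSet v).ncard) (hbdd : BddAbove G.support) :
    G.support ⊆ Set.Icc u (u + 2) := by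
  intro v hv
  have hne : G.support.Nonempty := ⟨v, hv⟩
  obtain ⟨w, hw⟩ := Nat.sInf_mem hne
  obtain ⟨w', hw'⟩ := Nat.sSup_mem hne hbdd
  have hmin := hedge.eq_of_forall_adj_gt (heven _) hw fun x hx =>
    (Nat.sInf_le (G.mem_support.mpr ⟨_, hx.symm⟩)).lt_of_ne (G.ne_of_adj hx)
  have hmax := hedge.eq_add_two_of_forall_adj_lt (heven _) hw' fun x hx =>
    (le_csSup hbdd (G.mem_support.mpr ⟨_, hx.symm⟩)).lt_of_ne (G.ne_of_adj hx).symm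
  exact ⟨hmin ▸ Nat.sInf_le hv, hmax ▸ le_csSup hbdd hv⟩

end UnitLengthExcept

theorem stmt19_general (n : ℕ) (G : SimpleGraph ℕ)
    (hsupp : ∀ a b, G.Adj a b → 1 ≤ a ∧ a ≤ n ∧ 1 ≤ b ∧ b ≤ n)
    (heven : ∀ v, Even ((G.neighborSet v).ncard))
    (hmax : ∀ a b, G.Adj a b → max a b - min a b ≤ 2)
    (honce : Set.ncard {p : ℕ × ℕ | p.1 < p.2 ∧ G.Adj p.1 p.2 ∧ p.2 - p.1 = 2} = 1) :
    ∃ u, ∀ x y, G.Adj x y ↔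
      s(x, y) ∈ ({s(u, u + 1), s(u + 1, u + 2), s(u, u + 2)} : Set (Sym2 ℕ)) := by
  obtain ⟨u, hlong, hedge⟩ := exists_unitLengthExcept hmax honce
  have hIcc := hedge.support_subset_Icc heven ⟨n, fun v ⟨w, hw⟩ => (hsupp v w hw).2.1⟩
  have hrange : ∀ x y, G.Adj x y → u ≤ x ∧ x ≤ u + 2 ∧ x ≠ y := fun x y h =>
    ⟨(hIcc ⟨y, h⟩).1, (hIcc ⟨y, h⟩).2, G.ne_of_adj h⟩
  have h01 : G.Adj u (u + 1) := adj_of_neighborSet_subset_pair (heven u) hlong fun w hw => by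
    have := hrange w u hw.symm
    simp only [Set.mem_insert_iff, Set.mem_singleton_iff]
    omega
  have h12 : G.Adj (u + 2) (u + 1) :=
    adj_of_neighborSet_subset_pair (heven (u + 2)) hlong.symm fun w hw => by
      have := hrange w (u + 2) hw.symm
      simp only [Set.mem_insert_iff, Set.mem_singleton_iff]
      omega
  refine ⟨u, fun x y => ?_⟩
  simp only [Set.mem_insert_iff, Set.mem_singleton_iff, Sym2.eq_iff]
  constructor
  · intro h
    have := hrange x y h
    have := hrange y x h.symm
    omega
  · rintro ((⟨rfl, rfl⟩ | ⟨rfl, rfl⟩) | (⟨rfl, rfl⟩ | ⟨rfl, rfl⟩) | (⟨rfl, rfl⟩ | ⟨rfl, rfl⟩))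
    exacts [h01, h01.symm, h12.symm, h12, hlong, hlong.symm]

/-- If every vertex of a graph `G` on `{1,…,n}` has even degree, `G` is nonempty,
the maximal edge length is 2, and exactly one edge has length 2, then `G` is a
triangle on `{u, u+1, u+2}` with edges `{u,u+1}, {u+1,u+2}, {u,u+2}`. -/
theorem stmt19 (n : ℕ) (G : SimpleGraph ℕ)
    (hsupp : ∀ a b, G.Adj a b → 1 ≤ a ∧ a ≤ n ∧ 1 ≤ b ∧ b ≤ n)
    (heven : ∀ v, Even ((G.neighborSet v).ncard))
    (hne : ∃ a b, G.Adj a b)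
    (hmax : ∀ a b, G.Adj a b → max a b - min a b ≤ 2)
    (honce : Set.ncard {p : ℕ × ℕ | p.1 < p.2 ∧ G.Adj p.1 p.2 ∧ p.2 - p.1 = 2} = 1) :
    ∃ u, ∀ x y, G.Adj x y ↔
      s(x, y) ∈ ({s(u, u + 1), s(u + 1, u + 2), s(u, u + 2)} : Set (Sym2 ℕ)) :=
  stmt19_general n G hsupp heven hmax honce
end
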